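/- arXiv:1512.04713 — 2 statements merged into one kernel-verified Lean document; each statement's English description precedes it below -/
import Mathlib

section
/- If the norms ‖·‖_p and ‖·‖_{w,p} are equivalent on c₀₀(E), then the closure of c₀₀(E) in ℓ_p(E) equals ℓ_p(E), the closure of c₀₀(E) in ℓ_p^u(E) equals ℓ_p^u(E), and consequently ℓ_p(E) = ℓ_p^u(E). -/
open Filter

noncomputable section

section Defs

variable {E : Type*}

/-- `x ∈ ℓ_p(E)`: absolutely `p`-summable sequences. -/
def MemLpSeq [NormedAddCommGroup E] (p : ℝ) (x : ℕ → E) : Prop :=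
  Summable fun j => ‖x j‖ ^ p

/-- The `ℓ_p` norm `(Σ ‖x j‖^p)^(1/p)`. -/
def lpNorm [NormedAddCommGroup E] (p : ℝ) (x : ℕ → E) : ℝ :=
  (∑' j, ‖x j‖ ^ p) ^ (1 / p)

/-- `x ∈ ℓ_p^w(E)`: weakly `p`-summable sequences. -/
def WSummable [NormedAddCommGroup E] [NormedSpace ℝ E] (p : ℝ) (x : ℕ → E) : Prop :=
  ∀ f : E →L[ℝ] ℝ, Summable fun j => |f (x j)| ^ p

/-- The weak `ℓ_p` norm `sup_{‖f‖ ≤ 1} (Σ |f (x j)|^p)^(1/p)`. -/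
def wNorm [NormedAddCommGroup E] [NormedSpace ℝ E] (p : ℝ) (x : ℕ → E) : ℝ :=
  ⨆ f : {f : E →L[ℝ] ℝ // ‖f‖ ≤ 1}, (∑' j, |f.1 (x j)| ^ p) ^ (1 / p)

/-- `x ∈ ℓ_p^{mid}(E)`: mid `p`-summable sequences. -/
def MidSummable [NormedAddCommGroup E] [NormedSpace ℝ E] (p : ℝ) (x : ℕ → E) : Prop :=
  WSummable p x ∧ ∀ xs : ℕ → E →L[ℝ] ℝ, WSummable p xs →
    Summable fun nj : ℕ × ℕ => |xs nj.1 (x nj.2)| ^ p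

/-- The mid `ℓ_p` norm: sup over the unit ball of `ℓ_p^w(E*)` of the double `ℓ_p` sum. -/
def midNorm [NormedAddCommGroup E] [NormedSpace ℝ E] (p : ℝ) (x : ℕ → E) : ℝ :=
  ⨆ xs : {xs : ℕ → E →L[ℝ] ℝ // WSummable p xs ∧ wNorm p xs ≤ 1},
    (∑' nj : ℕ × ℕ, |xs.1 nj.1 (x nj.2)| ^ p) ^ (1 / p)

/-- `x ∈ ℓ_p^u(E)`: unconditionally `p`-summable sequences (weak norms of tails tend to 0). -/
def USummable [NormedAddCommGroup E] [NormedSpace ℝ E] (p : ℝ) (x : ℕ → E) : Prop :=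
  WSummable p x ∧ Tendsto (fun k => wNorm p fun j => x (j + k)) atTop (nhds 0)

/-- `x ∈ c₀₀(E)`: finitely supported sequences. -/
def FinSupp [Zero E] (x : ℕ → E) : Prop := ∃ N, ∀ j ≥ N, x j = 0

/-- Truncation of a sequence at index `k`. -/
def trunc [Zero E] (k : ℕ) (x : ℕ → E) : ℕ → E := fun j => if j < k then x j else 0

end Defs

/-!
Truncations witness both densities: the distance from `x` to `trunc k x` is the norm of the
`k`-th tail, which tends to `0` in `ℓ_p` and, by definition, in `ℓ_p^u`. Since
`‖x‖_{w,p} ≤ ‖x‖_p`, always `ℓ_p ⊆ ℓ_p^u`. Conversely, for `x ∈ ℓ_p^w` the map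
`f ↦ (f x_j)ⱼ` from `E*` to `ℓ_p` has closed graph, hence is bounded, so `‖x‖_{w,p}` is finite
and dominates the weak norms of all truncations of `x`; the inequality
`‖·‖_p ≤ b ‖·‖_{w,p}` on `c₀₀(E)` then bounds the `ℓ_p` norms of these truncations uniformly.
-/

open Filter Finset Topology

section Trunc

variable {E : Type*}

lemma finSupp_trunc [Zero E] (k : ℕ) (x : ℕ → E) : FinSupp (trunc k x) :=
  ⟨k, fun j hj => if_neg (by omega)⟩

lemma tsum_comp_trunc [Zero E] {g : E → ℝ} (hg : g 0 = 0) (x : ℕ → E) (n : ℕ) :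
    ∑' j, g (trunc n x j) = ∑ j ∈ range n, g (x j) := by
  rw [tsum_eq_sum (s := range n) fun j hj => by simp [trunc, hg, mem_range.not.mp hj]]
  exact sum_congr rfl fun j hj => by simp [trunc, mem_range.mp hj]

lemma tsum_comp_sub_trunc [AddGroup E] {g : E → ℝ} (hg : g 0 = 0) (x : ℕ → E) (k : ℕ) :
    ∑' j, g (x j - trunc k x j) = ∑' j, g (x (j + k)) := by
  have hshift : (fun j => g (x (j + k) - trunc k x (j + k))) = fun j => g (x (j + k)) := by
    ext j; simp [trunc]
  by_cases hs : Summable fun j => g (x j - trunc k x j)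
  · rw [← hs.sum_add_tsum_nat_add k, hshift,
      sum_eq_zero fun j hj => by simp [trunc, mem_range.mp hj, hg], zero_add]
  · have hs' : ¬ Summable fun j => g (x (j + k)) := by
      rwa [← hshift, summable_nat_add_iff k (f := fun j => g (x j - trunc k x j))]
    rw [tsum_eq_zero_of_not_summable hs, tsum_eq_zero_of_not_summable hs']

lemma exists_finSupp_lt_of_tendsto [AddGroup E] (N : (ℕ → E) → ℝ) {x : ℕ → E}
    (h : Tendsto (fun k => N fun j => x j - trunc k x j) atTop (𝓝 0)) {ε : ℝ} (hε : 0 < ε) :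
    ∃ y, FinSupp y ∧ N (fun j => x j - y j) < ε := by
  obtain ⟨k, hk⟩ := (h.eventually (gt_mem_nhds hε)).exists
  exact ⟨trunc k x, finSupp_trunc k x, hk⟩

end Trunc

section StrongNorm

variable {E : Type*} [NormedAddCommGroup E] {p : ℝ}

lemma lpNorm_sub_trunc (hp : p ≠ 0) (x : ℕ → E) (k : ℕ) :
    lpNorm p (fun j => x j - trunc k x j) = lpNorm p fun j => x (j + k) := by
  rw [lpNorm, tsum_comp_sub_trunc (g := fun u : E => ‖u‖ ^ p) (by simp [hp]), lpNorm]

lemma lpNorm_trunc (hp : p ≠ 0) (x : ℕ → E) (n : ℕ) :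
    lpNorm p (trunc n x) = (∑ j ∈ range n, ‖x j‖ ^ p) ^ (1 / p) := by
  rw [lpNorm, tsum_comp_trunc (g := fun u : E => ‖u‖ ^ p) (by simp [hp])]

lemma lpNorm_nonneg (p : ℝ) (x : ℕ → E) : 0 ≤ lpNorm p x :=
  Real.rpow_nonneg (tsum_nonneg fun _ => by positivity) _

lemma tendsto_lpNorm_shift (hp : 0 < p) (x : ℕ → E) :
    Tendsto (fun k => lpNorm p fun j => x (j + k)) atTop (𝓝 0) := by
  simpa [lpNorm, Real.zero_rpow (inv_pos.mpr hp).ne'] using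
    (tendsto_sum_nat_add fun j => ‖x j‖ ^ p).rpow_const (p := 1 / p) (Or.inr (by positivity))

lemma memLpSeq_of_lpNorm_trunc_le (hp : 0 < p) {x : ℕ → E} {C : ℝ}
    (h : ∀ n, lpNorm p (trunc n x) ≤ C) : MemLpSeq p x := by
  refine summable_of_sum_range_le (c := C ^ p) (fun _ => by positivity) fun n => ?_
  have hS : 0 ≤ ∑ j ∈ range n, ‖x j‖ ^ p := sum_nonneg fun _ _ => by positivity
  calc ∑ j ∈ range n, ‖x j‖ ^ p = lpNorm p (trunc n x) ^ p := by
        rw [lpNorm_trunc hp.ne', one_div, Real.rpow_inv_rpow hS hp.ne']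
    _ ≤ C ^ p := Real.rpow_le_rpow (lpNorm_nonneg p _) (h n) hp.le

end StrongNorm

section WeakNorm

variable {E : Type*} [NormedAddCommGroup E] [NormedSpace ℝ E] {p : ℝ}

lemma wNorm_nonneg (p : ℝ) (x : ℕ → E) : 0 ≤ wNorm p x :=
  Real.iSup_nonneg fun _ => Real.rpow_nonneg (tsum_nonneg fun _ => by positivity) _

lemma wNorm_le {x : ℕ → E} {M : ℝ} (hM : 0 ≤ M)
    (h : ∀ f : E →L[ℝ] ℝ, ‖f‖ ≤ 1 → (∑' j, |f (x j)| ^ p) ^ (1 / p) ≤ M) : wNorm p x ≤ M :=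
  Real.iSup_le (fun f => h f.1 f.2) hM

lemma wNorm_sub_trunc (hp : p ≠ 0) (x : ℕ → E) (k : ℕ) :
    wNorm p (fun j => x j - trunc k x j) = wNorm p fun j => x (j + k) := by
  refine iSup_congr fun f => ?_
  rw [tsum_comp_sub_trunc (g := fun u : E => |f.1 u| ^ p) (by simp [hp])]

lemma abs_rpow_apply_le {f : E →L[ℝ] ℝ} (hp : 0 ≤ p) (u : E) :
    |f u| ^ p ≤ ‖f‖ ^ p * ‖u‖ ^ p := by
  rw [← Real.mul_rpow (norm_nonneg _) (norm_nonneg _)]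
  exact Real.rpow_le_rpow (abs_nonneg _) (f.le_opNorm u) hp

lemma MemLpSeq.wSummable (hp : 0 ≤ p) {x : ℕ → E} (hx : MemLpSeq p x) : WSummable p x :=
  fun f => .of_nonneg_of_le (fun _ => by positivity) (fun j => abs_rpow_apply_le hp (x j))
    (hx.mul_left _)

lemma wNorm_le_lpNorm (hp : 0 < p) {x : ℕ → E} (hx : MemLpSeq p x) : wNorm p x ≤ lpNorm p x := by
  refine wNorm_le (lpNorm_nonneg p x) fun f hf => ?_
  refine Real.rpow_le_rpow (tsum_nonneg fun _ => by positivity) ?_ (by positivity)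
  refine (hx.wSummable hp.le f).tsum_le_tsum (fun j => ?_) hx
  calc |f (x j)| ^ p ≤ ‖f‖ ^ p * ‖x j‖ ^ p := abs_rpow_apply_le hp.le _
    _ ≤ 1 * ‖x j‖ ^ p := by gcongr; exact Real.rpow_le_one (norm_nonneg _) hf hp.le
    _ = ‖x j‖ ^ p := one_mul _

lemma MemLpSeq.uSummable (hp : 0 < p) {x : ℕ → E} (hx : MemLpSeq p x) : USummable p x :=
  ⟨hx.wSummable hp.le, squeeze_zero (fun _ => wNorm_nonneg p _)
    (fun k => wNorm_le_lpNorm hp ((summable_nat_add_iff k).mpr hx)) (tendsto_lpNorm_shift hp x)⟩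

end WeakNorm

section WeakNormBound

variable {E : Type*} [NormedAddCommGroup E] [NormedSpace ℝ E] {p : ℝ}

lemma WSummable.exists_bound (hp : 1 ≤ p) {x : ℕ → E} (hx : WSummable p x) :
    ∃ C, ∀ f : E →L[ℝ] ℝ, (∑' j, |f (x j)| ^ p) ^ (1 / p) ≤ C * ‖f‖ := by
  have hq : (ENNReal.ofReal p).toReal = p := ENNReal.toReal_ofReal (by linarith)
  have : Fact (1 ≤ ENNReal.ofReal p) := ⟨by simpa using ENNReal.ofReal_le_ofReal hp⟩
  have hmem (f : E →L[ℝ] ℝ) : Memℓp (fun j => f (x j)) (ENNReal.ofReal p) :=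
    (memℓp_gen_iff (by rw [hq]; linarith)).2 (by simpa [hq] using hx f)
  let T : (E →L[ℝ] ℝ) →ₗ[ℝ] lp (fun _ : ℕ => ℝ) (ENNReal.ofReal p) :=
    { toFun f := ⟨_, hmem f⟩
      map_add' _ _ := rfl
      map_smul' _ _ := rfl }
  -- `E →L[ℝ] ℝ` is complete for every `E`, so the closed graph theorem applies.
  let T' := ContinuousLinearMap.ofSeqClosedGraph (g := T) fun u f y hu hTu => by
    ext j
    refine tendsto_nhds_unique (((lp.evalCLM ℝ _ _ j).continuous.tendsto y).comp hTu) ?_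
    exact ((ContinuousLinearMap.apply ℝ ℝ (x j)).continuous.tendsto f).comp hu
  refine ⟨‖T'‖, fun f => ?_⟩
  have h := T'.le_opNorm f
  rwa [lp.norm_eq_tsum_rpow (by rw [hq]; linarith), hq] at h

lemma WSummable.le_wNorm (hp : 1 ≤ p) {x : ℕ → E} (hx : WSummable p x) {f : E →L[ℝ] ℝ}
    (hf : ‖f‖ ≤ 1) : (∑' j, |f (x j)| ^ p) ^ (1 / p) ≤ wNorm p x := by
  obtain ⟨C, hC⟩ := hx.exists_bound hp
  refine le_ciSup (f := fun f : {f : E →L[ℝ] ℝ // ‖f‖ ≤ 1} => (∑' j, |f.1 (x j)| ^ p) ^ (1 / p))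
    ⟨max C 0, ?_⟩ ⟨f, hf⟩
  rintro _ ⟨g, rfl⟩
  calc _ ≤ C * ‖g.1‖ := hC g.1
    _ ≤ max C 0 * 1 := by gcongr <;> simp [g.2]
    _ = max C 0 := mul_one _

lemma WSummable.wNorm_trunc_le (hp : 1 ≤ p) {x : ℕ → E} (hx : WSummable p x) (n : ℕ) :
    wNorm p (trunc n x) ≤ wNorm p x := by
  have hp0 : p ≠ 0 := by linarith
  refine wNorm_le (wNorm_nonneg p x) fun f hf => (le_trans ?_ (hx.le_wNorm hp hf))
  rw [tsum_comp_trunc (g := fun u : E => |f u| ^ p) (by simp [hp0])]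
  gcongr
  exact Summable.sum_le_tsum _ (fun _ _ => by positivity) (hx f)

lemma WSummable.memLpSeq (hp : 1 ≤ p) {b : ℝ} (hb : 0 ≤ b)
    (hlp : ∀ y : ℕ → E, FinSupp y → lpNorm p y ≤ b * wNorm p y) {x : ℕ → E}
    (hx : WSummable p x) : MemLpSeq p x :=
  memLpSeq_of_lpNorm_trunc_le (C := b * wNorm p x) (by linarith) fun n =>
    (hlp _ (finSupp_trunc n x)).trans (mul_le_mul_of_nonneg_left (hx.wNorm_trunc_le hp n) hb)

end WeakNormBound

theorem stmt_2_general {E : Type*} [NormedAddCommGroup E] [NormedSpace ℝ E]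
    (p : ℝ) (hp : 1 ≤ p)
    (hequiv : ∃ a b : ℝ, 0 < a ∧ 0 < b ∧ ∀ x : ℕ → E, FinSupp x →
      a * wNorm p x ≤ lpNorm p x ∧ lpNorm p x ≤ b * wNorm p x) :
    (∀ x : ℕ → E, MemLpSeq p x → ∀ ε > 0, ∃ y : ℕ → E, FinSupp y ∧
        lpNorm p (fun j => x j - y j) < ε) ∧
    (∀ x : ℕ → E, USummable p x → ∀ ε > 0, ∃ y : ℕ → E, FinSupp y ∧
        wNorm p (fun j => x j - y j) < ε) ∧
    (∀ x : ℕ → E, MemLpSeq p x ↔ USummable p x) := by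
  obtain ⟨_, b, -, hb, hab⟩ := hequiv
  have hp0 : 0 < p := by linarith
  refine ⟨fun x _ ε hε => ?_, fun x hx ε hε => ?_, fun x => ⟨(·.uSummable hp0), fun hx => ?_⟩⟩
  · refine exists_finSupp_lt_of_tendsto (lpNorm p) ?_ hε
    simpa only [lpNorm_sub_trunc hp0.ne'] using tendsto_lpNorm_shift hp0 x
  · refine exists_finSupp_lt_of_tendsto (wNorm p) ?_ hε
    simpa only [wNorm_sub_trunc hp0.ne'] using hx.2
  · exact hx.1.memLpSeq hp hb.le fun y hy => (hab y hy).2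

/-- if the norms `‖·‖_p` and `‖·‖_{w,p}` are equivalent on `c₀₀(E)`, then
`c₀₀(E)` is dense in `ℓ_p(E)` and in `ℓ_p^u(E)` (each with its own norm), and
consequently `ℓ_p(E) = ℓ_p^u(E)`. -/
theorem stmt_2 {E : Type*} [NormedAddCommGroup E] [NormedSpace ℝ E] [CompleteSpace E]
    (p : ℝ) (hp : 1 ≤ p)
    (hequiv : ∃ a b : ℝ, 0 < a ∧ 0 < b ∧ ∀ x : ℕ → E, FinSupp x →
      a * wNorm p x ≤ lpNorm p x ∧ lpNorm p x ≤ b * wNorm p x) :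
    (∀ x : ℕ → E, MemLpSeq p x → ∀ ε > 0, ∃ y : ℕ → E, FinSupp y ∧
        lpNorm p (fun j => x j - y j) < ε) ∧
    (∀ x : ℕ → E, USummable p x → ∀ ε > 0, ∃ y : ℕ → E, FinSupp y ∧
        wNorm p (fun j => x j - y j) < ε) ∧
    (∀ x : ℕ → E, MemLpSeq p x ↔ USummable p x) :=
  stmt_2_general p hp hequiv
end
end

section
/- For sequences in a Banach space F: if (J_F(y_j))_j ∈ ℓ_p^mid(F**), then (y_j)_j ∈ ℓ_p^mid(F), where J_F : F → F** is the canonical embedding. Consequently the operator ideal W_{p;q}^mid of weakly mid (p;q)-summing operators is regular. (Key step: if (y_n*) is in the unit ball of ℓ_p^w(F*), then (J_{F*}(y_n*)) is in the unit ball of ℓ_p^w(F***), proved via Goldstine's theorem.) -/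
open Filter

noncomputable section

set_option maxSynthPendingDepth 3

/-!
A functional of norm `≤ 1` on `X**` restricts along `J_X` to a functional of norm `≤ 1` on `X`,
and every functional of norm `≤ 1` on `X` arises this way from its image under `J_{X*}`. So `J_X`
preserves weak `ℓ_p` norms. Since `(J_{X*} x_n*)` is weakly `p`-summable whenever `(x_n*)` is and
`J_{X*} x_n* (J_X y_j) = x_n* y_j`, the mid-summability conditions for `J_X ∘ y` contain those
for `y`.
-/

open NormedSpace

theorem WSummable.map {E F : Type*} [NormedAddCommGroup E] [NormedSpace ℝ E]
    [NormedAddCommGroup F] [NormedSpace ℝ F] {p : ℝ} {y : ℕ → E} (h : WSummable p y)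
    (T : E →L[ℝ] F) : WSummable p fun n => T (y n) :=
  fun f => h (f.comp T)

theorem wNorm_inclusionInDoubleDual {X : Type*} [NormedAddCommGroup X] [NormedSpace ℝ X]
    (p : ℝ) (y : ℕ → X) :
    wNorm p (fun n => inclusionInDoubleDual ℝ X (y n)) = wNorm p y := by
  refine congrArg sSup (Set.Subset.antisymm ?_ ?_)
  · rintro - ⟨⟨f, hf⟩, rfl⟩
    have hfJ : ‖f.comp (inclusionInDoubleDual ℝ X)‖ ≤ 1 :=
      calc ‖f.comp (inclusionInDoubleDual ℝ X)‖
          ≤ ‖f‖ * ‖inclusionInDoubleDual ℝ X‖ := f.opNorm_comp_le _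
        _ ≤ 1 * 1 := mul_le_mul hf (inclusionInDoubleDual_norm_le ℝ X) (norm_nonneg _)
            zero_le_one
        _ = 1 := one_mul 1
    exact ⟨⟨_, hfJ⟩, rfl⟩
  · rintro - ⟨⟨g, hg⟩, rfl⟩
    have hgJ : ‖inclusionInDoubleDual ℝ (StrongDual ℝ X) g‖ ≤ 1 :=
      (double_dual_bound ℝ (StrongDual ℝ X) g).trans hg
    exact ⟨⟨_, hgJ⟩, rfl⟩

theorem MidSummable.of_inclusionInDoubleDual {F : Type*} [NormedAddCommGroup F]
    [NormedSpace ℝ F] {p : ℝ} {y : ℕ → F}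
    (h : MidSummable p fun j => inclusionInDoubleDual ℝ F (y j)) : MidSummable p y :=
  ⟨fun f => h.1 (inclusionInDoubleDual ℝ (StrongDual ℝ F) f), fun xs hxs =>
    h.2 (fun n => inclusionInDoubleDual ℝ (StrongDual ℝ F) (xs n))
      (hxs.map (inclusionInDoubleDual ℝ (StrongDual ℝ F)))⟩

theorem stmt_18_general (p q : ℝ) :
    -- key step
    (∀ (F : Type) (_ : NormedAddCommGroup F) (_ : NormedSpace ℝ F) (_ : CompleteSpace F)
      (y : ℕ → StrongDual ℝ F), WSummable p y → wNorm p y ≤ 1 →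
        WSummable p (fun n => NormedSpace.inclusionInDoubleDual ℝ (StrongDual ℝ F) (y n)) ∧
        wNorm p (fun n => NormedSpace.inclusionInDoubleDual ℝ (StrongDual ℝ F) (y n)) ≤ 1) ∧
    -- the main statement on sequences
    (∀ (F : Type) (_ : NormedAddCommGroup F) (_ : NormedSpace ℝ F) (_ : CompleteSpace F)
      (y : ℕ → F),
        MidSummable p (fun j => NormedSpace.inclusionInDoubleDual ℝ F (y j)) →
        MidSummable p y) ∧
    -- regularity of `W_{p;q}^{mid}`
    (∀ (E F : Type) (_ : NormedAddCommGroup E) (_ : NormedSpace ℝ E) (_ : CompleteSpace E)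
      (_ : NormedAddCommGroup F) (_ : NormedSpace ℝ F) (_ : CompleteSpace F)
      (u : E →L[ℝ] F),
        (∀ x : ℕ → E, WSummable q x →
          MidSummable p fun j => NormedSpace.inclusionInDoubleDual ℝ F (u (x j))) →
        (∀ x : ℕ → E, WSummable q x → MidSummable p fun j => u (x j))) := by
  refine ⟨fun F _ _ _ y hy hy₁ =>
      ⟨hy.map _, (wNorm_inclusionInDoubleDual p y).trans_le hy₁⟩,
    fun F _ _ _ y => MidSummable.of_inclusionInDoubleDual, ?_⟩
  intro E F _ _ _ _ _ _ u hu x hx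
  exact (hu x hx).of_inclusionInDoubleDual

/-- if `(J_F (y_j))_j ∈ ℓ_p^{mid}(F**)` then `(y_j)_j ∈ ℓ_p^{mid}(F)`;
consequently the ideal `W_{p;q}^{mid}` of weakly mid `(p;q)`-summing operators is
regular. (Key step: the canonical embedding `J_{F*}` maps the unit ball of `ℓ_p^w(F*)`
into the unit ball of `ℓ_p^w(F***)`, proved via Goldstine's theorem.) -/
theorem stmt_18 (p q : ℝ) (hq : 1 ≤ q) (hqp : q ≤ p) :
    -- key step
    (∀ (F : Type) (_ : NormedAddCommGroup F) (_ : NormedSpace ℝ F) (_ : CompleteSpace F)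
      (y : ℕ → StrongDual ℝ F), WSummable p y → wNorm p y ≤ 1 →
        WSummable p (fun n => NormedSpace.inclusionInDoubleDual ℝ (StrongDual ℝ F) (y n)) ∧
        wNorm p (fun n => NormedSpace.inclusionInDoubleDual ℝ (StrongDual ℝ F) (y n)) ≤ 1) ∧
    -- the main statement on sequences
    (∀ (F : Type) (_ : NormedAddCommGroup F) (_ : NormedSpace ℝ F) (_ : CompleteSpace F)
      (y : ℕ → F),
        MidSummable p (fun j => NormedSpace.inclusionInDoubleDual ℝ F (y j)) →
        MidSummable p y) ∧
    -- regularity of `W_{p;q}^{mid}`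
    (∀ (E F : Type) (_ : NormedAddCommGroup E) (_ : NormedSpace ℝ E) (_ : CompleteSpace E)
      (_ : NormedAddCommGroup F) (_ : NormedSpace ℝ F) (_ : CompleteSpace F)
      (u : E →L[ℝ] F),
        (∀ x : ℕ → E, WSummable q x →
          MidSummable p fun j => NormedSpace.inclusionInDoubleDual ℝ F (u (x j))) →
        (∀ x : ℕ → E, WSummable q x → MidSummable p fun j => u (x j))) :=
  stmt_18_general p q
end
end
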